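/- arXiv:2001.01875 — 2 statements merged into one kernel-verified Lean document; each statement's English description precedes it below -/
import Mathlib

section
/- Let P be a near-Eulerian poset. Then for every x ∈ ∂P the subposet [x,∞) = {y ∈ P : x ≤ y} is near-Eulerian, and for every x ∉ ∂P the subposet [x,∞) is the boundary of an Eulerian poset. -/
open scoped Classical

noncomputable section

namespace CDIndex

variable {α β : Type}

/-- The natural rank function of a graded poset: `rho x` is one less than the largest
cardinality of a chain contained in `Set.Iic x` (i.e. the length of a maximal chain of
the interval `[0̂, x]`). -/
def rho [PartialOrder α] (x : α) : ℕ :=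
  sSup {k : ℕ | ∃ s : Finset α,
    IsChain (· ≤ ·) (s : Set α) ∧ (s : Set α) ⊆ Set.Iic x ∧ s.card = k + 1}

/-- A subset `S` of a poset is graded of rank `n` if every maximal chain of `S`
has exactly `n + 1` elements (i.e. length `n`). -/
def IsGradedSetOfRank [PartialOrder α] (S : Set α) (n : ℕ) : Prop :=
  ∀ s : Finset α, (s : Set α) ⊆ S → IsChain (· ≤ ·) (s : Set α) →
    (∀ t : Finset α, (t : Set α) ⊆ S → IsChain (· ≤ ·) (t : Set α) → s ⊆ t → s = t) →
    s.card = n + 1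

/-- A poset is graded of rank `n` if every maximal chain has length `n`. -/
def IsGradedOfRank (α : Type) [PartialOrder α] (n : ℕ) : Prop :=
  IsGradedSetOfRank (Set.univ : Set α) n

/-- Every interval `[s, t]` with `s < t`, `s, t ∈ S`, has equally many elements of even
rank and of odd rank. -/
def BalancedIntervalsIn [PartialOrder α] (S : Set α) : Prop :=
  ∀ s ∈ S, ∀ t ∈ S, s < t →
    {y ∈ Set.Icc s t | Even (rho y)}.ncard = {y ∈ Set.Icc s t | Odd (rho y)}.ncard

/-- An Eulerian poset of rank `n`: a graded poset with `0̂` and `1̂` in which every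
interval of positive length has equally many elements of each parity of rank. -/
def IsEulerianOfRank (α : Type) [PartialOrder α] (n : ℕ) : Prop :=
  (∃ b : α, ∀ z, b ≤ z) ∧ (∃ t : α, ∀ z, z ≤ t) ∧
    IsGradedOfRank α n ∧ BalancedIntervalsIn (Set.univ : Set α)

/-- A lower Eulerian poset of rank `n`: a graded poset with `0̂` all of whose intervals
are Eulerian. -/
def IsLowerEulerianOfRank (α : Type) [PartialOrder α] (n : ℕ) : Prop :=
  (∃ b : α, ∀ z, b ≤ z) ∧ IsGradedOfRank α n ∧ BalancedIntervalsIn (Set.univ : Set α)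

/-- A lower order ideal `S` (of a poset) which is lower Eulerian of rank `n`. -/
def IsLowerEulerianSetOfRank [PartialOrder α] (S : Set α) (n : ℕ) : Prop :=
  IsGradedSetOfRank S n ∧ BalancedIntervalsIn S

/-- The boundary of (a lower order ideal `S` of) a graded poset of rank `n`: the lower
order ideal generated by the rank `n - 1` elements which are covered by exactly one
element. -/
def boundaryIn [PartialOrder α] (S : Set α) (n : ℕ) : Set α :=
  {y | y ∈ S ∧ ∃ x ∈ S, rho x = n - 1 ∧ {z ∈ S | x ⋖ z}.ncard = 1 ∧ y ≤ x}

/-- The boundary `∂P` of a graded poset of rank `n`. -/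
def boundary (α : Type) [PartialOrder α] (n : ℕ) : Set α :=
  boundaryIn (Set.univ : Set α) n

/-- `α` is a near-Eulerian poset of rank `n`: it is obtained from an Eulerian poset `Q`
of rank `n + 1` by removing the maximal element and one element `q` of rank `n`. -/
def IsNearEulerianOfRank (α : Type) [PartialOrder α] [Finite α] (n : ℕ) : Prop :=
  ∃ (Q : Type) (_ : PartialOrder Q) (_ : Finite Q) (q top : Q),
    IsEulerianOfRank Q (n + 1) ∧ (∀ z, z ≤ top) ∧ rho q = n ∧ q ≠ top ∧
    Nonempty (α ≃o {x : Q // x ≠ q ∧ x ≠ top})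

/-- `α` is (isomorphic to) the boundary of an Eulerian poset, where `α` has rank `n`
(so the Eulerian poset has rank `n + 1`). -/
def IsBoundaryOfEulerianOfRank (α : Type) [PartialOrder α] [Finite α] (n : ℕ) : Prop :=
  ∃ (Q : Type) (_ : PartialOrder Q) (_ : Finite Q) (top : Q),
    IsEulerianOfRank Q (n + 1) ∧ (∀ z, z ≤ top) ∧
    Nonempty (α ≃o {x : Q // x ≠ top})

/-! Let `Q` be the Eulerian poset associated to `P`, so that `P = Q ∖ {q, 1̂}`. Every interval
`[v, 1̂]` of `Q` is again Eulerian, and `[x, ∞)` is `[x, 1̂]` with `1̂` removed, and with `q`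
removed as well exactly when `x < q`. It remains to see that `∂P = {x | x < q}`. By the
diamond property an element of corank 2 in `Q` is covered by exactly two elements, so in `P`
it is covered by exactly one iff `q` covers it; the rank `n - 1` elements generating `∂P` are
therefore those covered by `q`, and every `x < q` lies below one of them. -/

section Chains

variable {β γ : Type} [PartialOrder β] [PartialOrder γ]

def chainLengths (S : Set γ) : Set ℕ :=
  {k | ∃ s : Finset γ, IsChain (· ≤ ·) (s : Set γ) ∧ (s : Set γ) ⊆ S ∧ s.card = k + 1}

theorem rho_eq_sSup_chainLengths (x : γ) : rho x = sSup (chainLengths (Set.Iic x)) := rfl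

def MaxChainIn (S : Set γ) (c : Finset γ) : Prop :=
  (c : Set γ) ⊆ S ∧ IsChain (· ≤ ·) (c : Set γ) ∧
    ∀ d : Finset γ, (d : Set γ) ⊆ S → IsChain (· ≤ ·) (d : Set γ) → c ⊆ d → c = d

theorem isGradedSetOfRank_iff {S : Set γ} {n : ℕ} :
    IsGradedSetOfRank S n ↔ ∀ c, MaxChainIn S c → c.card = n + 1 :=
  ⟨fun h c hc => h c hc.1 hc.2.1 hc.2.2, fun h c h₁ h₂ h₃ => h c ⟨h₁, h₂, h₃⟩⟩

theorem chainLengths_image (f : β ↪o γ) (T : Set β) : chainLengths (f '' T) = chainLengths T := by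
  ext k
  constructor
  · rintro ⟨t, ht, htT, hcard⟩
    obtain ⟨s, hsT, rfl⟩ := Finset.subset_set_image_iff.1 htT
    rw [Finset.coe_image] at ht
    exact ⟨s, IsChain.image_relEmbedding_iff.1 ht, hsT,
      (Finset.card_image_of_injective _ f.injective).symm.trans hcard⟩
  · rintro ⟨s, hs, hsT, hcard⟩
    refine ⟨s.image f, ?_, ?_, (Finset.card_image_of_injective _ f.injective).trans hcard⟩
    · rw [Finset.coe_image]
      exact hs.image f
    · rw [Finset.coe_image]
      exact Set.image_mono hsT

theorem MaxChainIn.image (f : β ↪o γ) {T : Set β} {c : Finset β} (hc : MaxChainIn T c) :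
    MaxChainIn (f '' T) (c.image f) := by
  refine ⟨?_, ?_, fun d hdT hd hcd => ?_⟩
  · rw [Finset.coe_image]
    exact Set.image_mono hc.1
  · rw [Finset.coe_image]
    exact hc.2.1.image f
  · obtain ⟨d, hdT', rfl⟩ := Finset.subset_set_image_iff.1 hdT
    rw [Finset.coe_image] at hd
    rw [Finset.image_subset_image_iff f.injective] at hcd
    rw [hc.2.2 d hdT' (IsChain.image_relEmbedding_iff.1 hd) hcd]

theorem MaxChainIn.mem_of_comparable {S : Set γ} {c : Finset γ} (hc : MaxChainIn S c) {a : γ}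
    (ha : a ∈ S) (hcomp : ∀ w ∈ c, a ≤ w ∨ w ≤ a) : a ∈ c := by
  have hinsert := hc.2.2 (insert a c)
    (by rw [Finset.coe_insert]; exact Set.insert_subset ha hc.1)
    (by rw [Finset.coe_insert]; exact hc.2.1.insert fun b hb _ => hcomp b hb)
    (Finset.subset_insert a c)
  exact hinsert ▸ Finset.mem_insert_self a c

theorem MaxChainIn.union {S : Set γ} {m : γ} (hm : m ∈ S) {c₁ c₂ : Finset γ}
    (h₁ : MaxChainIn (S ∩ Set.Iic m) c₁) (h₂ : MaxChainIn (S ∩ Set.Ici m) c₂) :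
    MaxChainIn S (c₁ ∪ c₂) ∧ (c₁ ∪ c₂).card + 1 = c₁.card + c₂.card := by
  have hm₁ : m ∈ c₁ := h₁.mem_of_comparable ⟨hm, le_rfl⟩ fun w hw => Or.inr (h₁.1 hw).2
  have hm₂ : m ∈ c₂ := h₂.mem_of_comparable ⟨hm, le_rfl⟩ fun w hw => Or.inl (h₂.1 hw).2
  have hle : ∀ w₁ ∈ c₁, ∀ w₂ ∈ c₂, w₁ ≤ w₂ := fun w₁ hw₁ w₂ hw₂ =>
    (h₁.1 hw₁).2.trans (h₂.1 hw₂).2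
  refine ⟨⟨?_, ?_, fun d hdS hd hsub => hsub.antisymm fun w hw => ?_⟩, ?_⟩
  · rw [Finset.coe_union]
    exact Set.union_subset (h₁.1.trans Set.inter_subset_left) (h₂.1.trans Set.inter_subset_left)
  · rw [Finset.coe_union]
    exact isChain_union.2 ⟨h₁.2.1, h₂.2.1, fun a ha b hb _ => Or.inl (hle a ha b hb)⟩
  · have hcomp : ∀ v ∈ c₁ ∪ c₂, w ≤ v ∨ v ≤ w := fun v hv => hd.total hw (hsub hv)
    rcases hcomp m (Finset.mem_union_left _ hm₁) with hwm | hmw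
    · exact Finset.mem_union_left _ <| h₁.mem_of_comparable ⟨hdS hw, hwm⟩
        fun v hv => hcomp v (Finset.mem_union_left _ hv)
    · exact Finset.mem_union_right _ <| h₂.mem_of_comparable ⟨hdS hw, hmw⟩
        fun v hv => hcomp v (Finset.mem_union_right _ hv)
  · have hinter : c₁ ∩ c₂ = {m} := Finset.eq_singleton_iff_unique_mem.2
      ⟨Finset.mem_inter.2 ⟨hm₁, hm₂⟩, fun w hw =>
        le_antisymm (h₁.1 (Finset.mem_inter.1 hw).1).2 (h₂.1 (Finset.mem_inter.1 hw).2).2⟩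
    rw [← Finset.card_union_add_card_inter, hinter, Finset.card_singleton]

variable [Finite γ]

theorem exists_maxChainIn_superset {S : Set γ} {c : Finset γ} (hcS : (c : Set γ) ⊆ S)
    (hc : IsChain (· ≤ ·) (c : Set γ)) : ∃ d, MaxChainIn S d ∧ c ⊆ d := by
  let chains : Set (Finset γ) := {d | (d : Set γ) ⊆ S ∧ IsChain (· ≤ ·) (d : Set γ) ∧ c ⊆ d}
  obtain ⟨d, hd, hmax⟩ := (Set.toFinite chains).exists_maximalFor Finset.card chains
    ⟨c, hcS, hc, subset_rfl⟩
  refine ⟨d, ⟨hd.1, hd.2.1, fun e heS he hde => ?_⟩, hd.2.2⟩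
  exact Finset.eq_of_subset_of_card_le hde
    (hmax ⟨heS, he, hd.2.2.trans hde⟩ (Finset.card_le_card hde))

theorem exists_maxChainIn_mem {S : Set γ} {a : γ} (ha : a ∈ S) :
    ∃ c, MaxChainIn S c ∧ a ∈ c := by
  obtain ⟨c, hc, hac⟩ := exists_maxChainIn_superset (c := {a}) (by simpa using ha) (by simp)
  exact ⟨c, hc, hac (Finset.mem_singleton_self a)⟩

theorem sSup_chainLengths_add_one {S : Set γ} {c : Finset γ} (hc : MaxChainIn S c)
    (hne : c.Nonempty) (h : ∀ d, MaxChainIn S d → d.card = c.card) :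
    sSup (chainLengths S) + 1 = c.card := by
  have hlengths : chainLengths S = Set.Iic (c.card - 1) := by
    ext k
    constructor
    · rintro ⟨s, hs, hsS, hcard⟩
      obtain ⟨d, hd, hsd⟩ := exists_maxChainIn_superset hsS hs
      have := Finset.card_le_card hsd
      have := h d hd
      simp only [Set.mem_Iic]
      omega
    · intro hk
      obtain ⟨s, hsc, hcard⟩ := Finset.exists_subset_card_eq (s := c) (n := k + 1)
        (by have := hne.card_pos; simp only [Set.mem_Iic] at hk; omega)
      exact ⟨s, hc.2.1.mono (Finset.coe_subset.2 hsc), (Finset.coe_subset.2 hsc).trans hc.1, hcard⟩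
  rw [hlengths, csSup_Iic]
  have := hne.card_pos
  omega

end Chains

section Graded

variable {γ : Type} [PartialOrder γ] {N : ℕ} {a y t : γ} {c : Finset γ}

theorem IsGradedOfRank.card_add_card_of_maxChainIn (hg : IsGradedOfRank γ N) {d : Finset γ}
    (hc : MaxChainIn (Set.Iic y) c) (hd : MaxChainIn (Set.Ici y) d) :
    c.card + d.card = N + 2 := by
  obtain ⟨hmax, hcard⟩ := MaxChainIn.union (S := Set.univ) (Set.mem_univ y)
    (by rwa [Set.univ_inter]) (by rwa [Set.univ_inter])
  have := isGradedSetOfRank_iff.1 hg _ hmax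
  omega

variable [Finite γ]

theorem IsGradedOfRank.card_maxChainIn_Iic (hg : IsGradedOfRank γ N)
    (hc : MaxChainIn (Set.Iic y) c) : c.card = rho y + 1 := by
  obtain ⟨d, hd, -⟩ := exists_maxChainIn_mem (Set.self_mem_Ici (a := y))
  have hy : y ∈ c := hc.mem_of_comparable le_rfl fun w hw => Or.inr (hc.1 hw)
  have hsSup := sSup_chainLengths_add_one hc ⟨y, hy⟩ fun c' hc' => by
    have := hg.card_add_card_of_maxChainIn hc' hd
    have := hg.card_add_card_of_maxChainIn hc hd
    omega
  rw [rho_eq_sSup_chainLengths]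
  omega

theorem IsGradedOfRank.card_maxChainIn_Icc (hg : IsGradedOfRank γ N) (hay : a ≤ y)
    (hc : MaxChainIn (Set.Icc a y) c) : rho a + c.card = rho y + 1 := by
  obtain ⟨c₁, hc₁, -⟩ := exists_maxChainIn_mem (Set.self_mem_Iic (a := a))
  obtain ⟨hmax, hcard⟩ := MaxChainIn.union (S := Set.Iic y) hay
    (by rwa [Set.inter_eq_right.2 (Set.Iic_subset_Iic.2 hay)])
    (by rwa [Set.inter_comm, Set.Ici_inter_Iic])
  have := hg.card_maxChainIn_Iic hmax
  have := hg.card_maxChainIn_Iic hc₁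
  omega

theorem IsGradedOfRank.rho_strictMono (hg : IsGradedOfRank γ N) :
    StrictMono (rho : γ → ℕ) := fun a y hay => by
  obtain ⟨c, hc, hsub⟩ := exists_maxChainIn_superset (S := Set.Icc a y) (c := {a, y})
    (by simp [Set.insert_subset_iff, hay.le]) (by simpa using IsChain.pair hay.le)
  have := Finset.card_le_card hsub
  rw [Finset.card_pair hay.ne] at this
  have := hg.card_maxChainIn_Icc hay.le hc
  omega

theorem IsGradedOfRank.rho_covBy (hg : IsGradedOfRank γ N) (hay : a ⋖ y) :
    rho y = rho a + 1 := by
  obtain ⟨c, hc, -⟩ := exists_maxChainIn_mem (Set.left_mem_Icc.2 hay.le)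
  have hc₂ : c ⊆ {a, y} := by
    rw [← Finset.coe_subset, Finset.coe_pair, ← hay.Icc_eq]
    exact hc.1
  have := (Finset.card_le_card hc₂).trans Finset.card_le_two
  have := hg.card_maxChainIn_Icc hay.le hc
  have := hg.rho_strictMono hay.lt
  omega

theorem IsGradedOfRank.covBy_of_rho_eq (hg : IsGradedOfRank γ N) (hay : a < y)
    (hrho : rho y = rho a + 1) : a ⋖ y :=
  ⟨hay, fun _ h₁ h₂ => by
    have := hg.rho_strictMono h₁
    have := hg.rho_strictMono h₂
    omega⟩

theorem IsGradedOfRank.rho_top (hg : IsGradedOfRank γ N) (ht : ∀ z, z ≤ t) : rho t = N := by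
  obtain ⟨c, hc, -⟩ := exists_maxChainIn_mem (Set.self_mem_Iic (a := t))
  have := hg.card_maxChainIn_Iic hc
  rw [show Set.Iic t = Set.univ from Set.eq_univ_of_forall ht] at hc
  have := isGradedSetOfRank_iff.1 hg c hc
  omega

theorem IsGradedOfRank.rho_lt (hg : IsGradedOfRank γ N) (ht : ∀ z, z ≤ t) (hyt : y ≠ t) :
    rho y < N :=
  hg.rho_top ht ▸ hg.rho_strictMono ((ht y).lt_of_ne hyt)

theorem IsGradedOfRank.sSup_chainLengths_Icc (hg : IsGradedOfRank γ N) (hay : a ≤ y) :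
    sSup (chainLengths (Set.Icc a y)) = rho y - rho a := by
  obtain ⟨c, hc, hac⟩ := exists_maxChainIn_mem (Set.left_mem_Icc.2 hay)
  have := hg.card_maxChainIn_Icc hay hc
  have := sSup_chainLengths_add_one hc ⟨a, hac⟩ fun d hd => by
    have := hg.card_maxChainIn_Icc hay hd
    omega
  omega

theorem IsGradedOfRank.isGradedSetOfRank_Icc (hg : IsGradedOfRank γ N) (ht : ∀ z, z ≤ t)
    (v : γ) : IsGradedSetOfRank (Set.Icc v t) (N - rho v) :=
  isGradedSetOfRank_iff.2 fun c hc => by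
    have := hg.card_maxChainIn_Icc (ht v) hc
    have := hg.rho_top ht
    have := hg.rho_strictMono.monotone (ht v)
    omega

end Graded

section Transport

variable {β γ : Type} [PartialOrder β] [PartialOrder γ]

theorem rho_orderIso (e : β ≃o γ) (x : β) : rho (e x) = rho x := by
  rw [rho_eq_sSup_chainLengths, rho_eq_sSup_chainLengths, ← e.image_Iic,
    ← chainLengths_image e.toOrderEmbedding]
  rfl

theorem ncard_covBy_orderIso (e : β ≃o γ) (x : β) :
    {z | e x ⋖ z}.ncard = {z | x ⋖ z}.ncard := by
  rw [← Set.ncard_image_of_injective _ e.injective]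
  congr 1
  ext z
  obtain ⟨z, rfl⟩ := e.surjective z
  simp [apply_covBy_apply_iff]

theorem mem_boundary_iff {n : ℕ} {y : γ} :
    y ∈ boundary γ n ↔ ∃ x, rho x = n - 1 ∧ {z | x ⋖ z}.ncard = 1 ∧ y ≤ x := by
  simp [boundary, boundaryIn]

theorem orderIso_mem_boundary_iff (e : β ≃o γ) {n : ℕ} {x : β} :
    e x ∈ boundary γ n ↔ x ∈ boundary β n := by
  simp only [mem_boundary_iff, e.surjective.exists, rho_orderIso, ncard_covBy_orderIso,
    e.le_iff_le]

variable {p : γ → Prop}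

theorem rho_subtype (y : Subtype p) :
    rho y = sSup (chainLengths (Subtype.val '' Set.Iic y)) := by
  rw [rho_eq_sSup_chainLengths, ← chainLengths_image (OrderEmbedding.subtype p)]
  rfl

theorem rho_subtype_of_isLowerSet (hp : IsLowerSet {x | p x}) (y : Subtype p) :
    rho y = rho (y : γ) := by
  have hIic : Subtype.val '' Set.Iic y = Set.Iic (y : γ) := by
    ext w
    constructor
    · rintro ⟨z, hz, rfl⟩
      exact hz
    · intro hw
      exact ⟨⟨w, hp hw y.2⟩, hw, rfl⟩
  rw [rho_subtype, hIic, rho_eq_sSup_chainLengths]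

theorem coe_covBy_coe_of_isLowerSet (hp : IsLowerSet {x | p x}) {a b : Subtype p} :
    (a : γ) ⋖ b ↔ a ⋖ b :=
  ⟨fun h => ⟨h.1, fun _ h₁ h₂ => h.2 h₁ h₂⟩,
    fun h => ⟨h.1, fun c h₁ h₂ => h.2 (c := ⟨c, hp h₂.le b.2⟩) h₁ h₂⟩⟩

theorem isGradedOfRank_subtype {S : Set γ} {m : ℕ} (h : IsGradedSetOfRank S m) :
    IsGradedOfRank S m :=
  isGradedSetOfRank_iff.2 fun c hc => by
    have hmax := hc.image (OrderEmbedding.subtype (· ∈ S))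
    rw [Set.image_univ, OrderEmbedding.coe_subtype, Subtype.range_coe] at hmax
    rw [← isGradedSetOfRank_iff.1 h _ hmax,
      Finset.card_image_of_injective _ Subtype.val_injective]

theorem IsGradedOfRank.rho_subtype_Icc [Finite γ] {N : ℕ} (hg : IsGradedOfRank γ N) {a t : γ}
    (y : Set.Icc a t) : rho y = rho (y : γ) - rho a := by
  rw [rho_subtype, Set.image_subtype_val_Icc_Iic, hg.sSup_chainLengths_Icc y.2.1]

end Transport

section Eulerian

variable {γ : Type} [PartialOrder γ] {N : ℕ} {t : γ}

theorem BalancedIntervalsIn.ncard_parity_eq {S : Set γ} (hbal : BalancedIntervalsIn S)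
    {a b : γ} (ha : a ∈ S) (hb : b ∈ S) (hab : a < b) (k : ℕ) :
    {y ∈ Set.Icc a b | Even (rho y) ↔ Even k}.ncard =
      {y ∈ Set.Icc a b | ¬(Even (rho y) ↔ Even k)}.ncard := by
  have := hbal a ha b hb hab
  rcases Nat.even_or_odd k with hk | hk
  · simpa [hk, Nat.not_even_iff_odd] using this
  · simpa [Nat.not_even_iff_odd.2 hk, Nat.not_even_iff_odd] using this.symm

variable [Finite γ]

theorem IsGradedOfRank.ncard_covBy_eq_two (hg : IsGradedOfRank γ N) (ht : ∀ z, z ≤ t)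
    (hbal : BalancedIntervalsIn (Set.univ : Set γ)) {x : γ} (hx : rho x + 2 = N) :
    {z | x ⋖ z}.ncard = 2 := by
  have hrt := hg.rho_top ht
  have hxt : x < t := (ht x).lt_of_ne (by rintro rfl; omega)
  have hpar : ∀ y ∈ Set.Icc x t, (Even (rho y) ↔ Even (rho x)) ↔ (y = x ∨ y = t) := by
    rintro y ⟨hxy, hyt⟩
    rcases hxy.eq_or_lt with rfl | hxy
    · simp
    rcases hyt.eq_or_lt with rfl | hyt
    · simp [hrt, ← hx, Nat.even_add]
    have := hg.rho_strictMono hxy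
    have := hg.rho_strictMono hyt
    have hy : rho y = rho x + 1 := by omega
    simp [hy, hxy.ne', hyt.ne, Nat.even_add_one, -Nat.not_even_iff_odd]
  have hends : {y ∈ Set.Icc x t | Even (rho y) ↔ Even (rho x)} = {x, t} := by
    ext y
    constructor
    · rintro ⟨hy, hpy⟩
      exact (hpar y hy).1 hpy
    · rintro (rfl | rfl)
      exacts [⟨⟨le_rfl, hxt.le⟩, Iff.rfl⟩,
        ⟨⟨hxt.le, le_rfl⟩, (hpar y ⟨hxt.le, le_rfl⟩).2 (Or.inr rfl)⟩]
  have hcovers : {y ∈ Set.Icc x t | ¬(Even (rho y) ↔ Even (rho x))} = {z | x ⋖ z} := by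
    ext y
    constructor
    · rintro ⟨hy, hpy⟩
      rw [hpar y hy, not_or] at hpy
      have hxy := hy.1.lt_of_ne' hpy.1
      have := hg.rho_strictMono hxy
      have := hg.rho_strictMono (hy.2.lt_of_ne hpy.2)
      exact hg.covBy_of_rho_eq hxy (by omega)
    · intro hy
      have := hg.rho_covBy hy
      refine ⟨⟨hy.le, ht y⟩, ?_⟩
      rw [hpar y ⟨hy.le, ht y⟩]
      rintro (rfl | rfl) <;> omega
  rw [← hcovers, ← hbal.ncard_parity_eq trivial trivial hxt, hends, Set.ncard_pair hxt.ne]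

theorem IsGradedOfRank.isEulerianOfRank_Icc (hg : IsGradedOfRank γ N) (ht : ∀ z, z ≤ t)
    (hbal : BalancedIntervalsIn (Set.univ : Set γ)) (v : γ) :
    IsEulerianOfRank (Set.Icc v t) (N - rho v) := by
  refine ⟨⟨⟨v, le_rfl, ht v⟩, fun z => z.2.1⟩, ⟨⟨t, ht v, le_rfl⟩, fun z => z.2.2⟩,
    isGradedOfRank_subtype (hg.isGradedSetOfRank_Icc ht v), ?_⟩
  rintro a - b - hab
  have hval : ∀ P : ℕ → Prop, {y ∈ Set.Icc a b | P (rho y)}.ncard =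
      {w ∈ Set.Icc (a : γ) b | P (rho w - rho v)}.ncard := by
    intro P
    rw [← Set.ncard_image_of_injective _ Subtype.val_injective]
    congr 1
    ext w
    constructor
    · rintro ⟨y, ⟨hy, hPy⟩, rfl⟩
      exact ⟨hy, hg.rho_subtype_Icc y ▸ hPy⟩
    · rintro ⟨hw, hPw⟩
      exact ⟨⟨w, a.2.1.trans hw.1, hw.2.trans b.2.2⟩, ⟨hw, by rwa [hg.rho_subtype_Icc]⟩, rfl⟩
  have hshift : ∀ w ∈ Set.Icc (a : γ) b,
      Even (rho w - rho v) ↔ (Even (rho w) ↔ Even (rho v)) :=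
    fun w hw => Nat.even_sub (hg.rho_strictMono.monotone (a.2.1.trans hw.1))
  have heven : {w ∈ Set.Icc (a : γ) b | Even (rho w - rho v)} =
      {w ∈ Set.Icc (a : γ) b | Even (rho w) ↔ Even (rho v)} :=
    Set.ext fun w => and_congr_right (hshift w)
  have hodd : {w ∈ Set.Icc (a : γ) b | Odd (rho w - rho v)} =
      {w ∈ Set.Icc (a : γ) b | ¬(Even (rho w) ↔ Even (rho v))} :=
    Set.ext fun w => and_congr_right fun hw => by rw [← Nat.not_even_iff_odd, hshift w hw]
  rw [hval, hval, heven, hodd]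
  exact hbal.ncard_parity_eq trivial trivial hab (rho v)

end Eulerian

section NearEulerian

variable {α Q : Type} [PartialOrder α] [PartialOrder Q] {n : ℕ} {q top : Q}

theorem nonempty_orderIso_Ici {p : Q → Prop} (e : α ≃o Subtype p) (x : α)
    (htop : ∀ z, z ≤ top) {r : Set.Icc (e x : Q) top → Prop} (hr : ∀ y, r y ↔ p y) :
    Nonempty (Set.Ici x ≃o Subtype r) := by
  refine ⟨OrderIso.ofSurjective (OrderEmbedding.ofMapLEIff
    (fun y => ⟨⟨e y, e.monotone y.2, htop _⟩, (hr _).2 (e y).2⟩) fun a b => e.le_iff_le) ?_⟩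
  rintro ⟨⟨z, hxz, -⟩, hz⟩
  refine ⟨⟨e.symm ⟨z, (hr _).1 hz⟩, e.le_symm_apply.2 hxz⟩, ?_⟩
  simp

variable [Finite Q]

theorem IsGradedOfRank.isLowerSet_ne_and_ne (hg : IsGradedOfRank Q (n + 1))
    (htop : ∀ z, z ≤ top) (hq : rho q = n) : IsLowerSet {z | z ≠ q ∧ z ≠ top} := by
  rintro a b hba ⟨haq, hat⟩
  refine ⟨?_, fun hbt => hat (le_antisymm (htop a) (hbt ▸ hba))⟩
  rintro rfl
  have := hg.rho_strictMono (hba.lt_of_ne' haq)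
  have := hg.rho_lt htop hat
  omega

theorem IsGradedOfRank.ncard_covBy_compl_eq_one_iff (hg : IsGradedOfRank Q (n + 1))
    (htop : ∀ z, z ≤ top) (hbal : BalancedIntervalsIn (Set.univ : Set Q)) (hq : rho q = n)
    {v : {z : Q // z ≠ q ∧ z ≠ top}} (hv : rho (v : Q) + 2 = n + 1) :
    {z | v ⋖ z}.ncard = 1 ↔ (v : Q) ⋖ q := by
  have hlower := hg.isLowerSet_ne_and_ne htop hq
  have himage : Subtype.val '' {z | v ⋖ z} = {z : Q | (v : Q) ⋖ z} \ {q} := by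
    ext w
    constructor
    · rintro ⟨z, hz, rfl⟩
      exact ⟨(coe_covBy_coe_of_isLowerSet hlower).2 hz, z.2.1⟩
    · rintro ⟨hw, hwq⟩
      have := hg.rho_covBy hw
      have hwt : w ≠ top := by
        rintro rfl
        have := hg.rho_top htop
        omega
      exact ⟨⟨w, hwq, hwt⟩, (coe_covBy_coe_of_isLowerSet hlower).1 hw, rfl⟩
  rw [← Set.ncard_image_of_injective _ Subtype.val_injective, himage]
  have htwo := hg.ncard_covBy_eq_two htop hbal hv
  by_cases hvq : (v : Q) ⋖ q
  · simp [Set.ncard_sdiff_singleton_of_mem (s := {z | (v : Q) ⋖ z}) hvq, htwo, hvq]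
  · simp [Set.sdiff_singleton_eq_self (s := {z | (v : Q) ⋖ z}) hvq, htwo, hvq]

theorem IsGradedOfRank.mem_boundary_compl_iff (hg : IsGradedOfRank Q (n + 1))
    (htop : ∀ z, z ≤ top) (hbal : BalancedIntervalsIn (Set.univ : Set Q)) (hq : rho q = n)
    (v : {z : Q // z ≠ q ∧ z ≠ top}) :
    v ∈ boundary {z : Q // z ≠ q ∧ z ≠ top} n ↔ (v : Q) < q := by
  have hlower := hg.isLowerSet_ne_and_ne htop hq
  rw [mem_boundary_iff]
  constructor
  · rintro ⟨w, hw, hcov, hvw⟩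
    obtain ⟨z, hz⟩ := Set.ncard_eq_one.1 hcov
    have hwz : w ⋖ z := (hz.symm ▸ Set.mem_singleton z : z ∈ {z | w ⋖ z})
    have := hg.rho_covBy ((coe_covBy_coe_of_isLowerSet hlower).2 hwz)
    have := hg.rho_lt htop z.2.2
    rw [rho_subtype_of_isLowerSet hlower] at hw
    have hwq := (hg.ncard_covBy_compl_eq_one_iff htop hbal hq (by omega)).1 hcov
    exact (Subtype.coe_le_coe.2 hvw).trans_lt hwq.lt
  · intro hvq
    obtain ⟨z, hvz, hzq⟩ := exists_le_covBy_of_lt hvq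
    have := hg.rho_covBy hzq
    let z' : {z : Q // z ≠ q ∧ z ≠ top} := ⟨z, hzq.lt.ne, (hzq.lt.trans_le (htop q)).ne⟩
    have hz' : rho (z' : Q) + 2 = n + 1 := show rho z + 2 = n + 1 by omega
    refine ⟨z', ?_, (hg.ncard_covBy_compl_eq_one_iff htop hbal hq hz').2 hzq, hvz⟩
    rw [rho_subtype_of_isLowerSet hlower]
    omega

theorem IsGradedOfRank.rho_coe_apply (hg : IsGradedOfRank Q (n + 1)) (htop : ∀ z, z ≤ top)
    (hq : rho q = n) (e : α ≃o {z : Q // z ≠ q ∧ z ≠ top}) (x : α) :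
    rho (e x : Q) = rho x := by
  rw [← rho_orderIso e, rho_subtype_of_isLowerSet (hg.isLowerSet_ne_and_ne htop hq)]

theorem IsGradedOfRank.isEulerianOfRank_Icc_apply (hg : IsGradedOfRank Q (n + 1))
    (htop : ∀ z, z ≤ top) (hbal : BalancedIntervalsIn (Set.univ : Set Q)) (hq : rho q = n)
    (e : α ≃o {z : Q // z ≠ q ∧ z ≠ top}) (x : α) :
    IsEulerianOfRank (Set.Icc (e x : Q) top) (n - rho x + 1) := by
  have := hg.rho_coe_apply htop hq e x
  have := hg.rho_lt htop (e x).2.2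
  convert hg.isEulerianOfRank_Icc htop hbal (e x : Q) using 1
  omega

theorem IsGradedOfRank.isNearEulerianOfRank_Ici (hg : IsGradedOfRank Q (n + 1))
    (htop : ∀ z, z ≤ top) (hbal : BalancedIntervalsIn (Set.univ : Set Q)) (hq : rho q = n)
    (hqt : q ≠ top) [Finite α] (e : α ≃o {z : Q // z ≠ q ∧ z ≠ top}) {x : α}
    (hx : (e x : Q) < q) : IsNearEulerianOfRank (Set.Ici x) (n - rho x) := by
  refine ⟨Set.Icc (e x : Q) top, inferInstance, inferInstance, ⟨q, hx.le, htop q⟩,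
    ⟨top, htop _, le_rfl⟩, hg.isEulerianOfRank_Icc_apply htop hbal hq e x, fun z => z.2.2, ?_,
    fun h => hqt (congrArg Subtype.val h),
    nonempty_orderIso_Ici e x htop fun y => by simp [Subtype.ext_iff]⟩
  rw [hg.rho_subtype_Icc, ← hg.rho_coe_apply htop hq e x]
  exact congrArg (· - _) hq

theorem IsGradedOfRank.isBoundaryOfEulerianOfRank_Ici (hg : IsGradedOfRank Q (n + 1))
    (htop : ∀ z, z ≤ top) (hbal : BalancedIntervalsIn (Set.univ : Set Q)) (hq : rho q = n)
    [Finite α] (e : α ≃o {z : Q // z ≠ q ∧ z ≠ top}) {x : α} (hx : ¬(e x : Q) < q) :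
    IsBoundaryOfEulerianOfRank (Set.Ici x) (n - rho x) := by
  refine ⟨Set.Icc (e x : Q) top, inferInstance, inferInstance, ⟨top, htop _, le_rfl⟩,
    hg.isEulerianOfRank_Icc_apply htop hbal hq e x, fun z => z.2.2,
    nonempty_orderIso_Ici e x htop fun y => ?_⟩
  have hyq : (y : Q) ≠ q := fun h => hx ((y.2.1.trans_eq h).lt_of_ne (e x).2.1)
  simp [Subtype.ext_iff, hyq]

end NearEulerian

theorem Ici_nearEulerian_or_boundary_general
    (α : Type) [PartialOrder α] [Finite α] (n : ℕ)
    (h : IsNearEulerianOfRank α n) :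
    (∀ x : α, x ∈ boundary α n → IsNearEulerianOfRank (Set.Ici x) (n - rho x)) ∧
    (∀ x : α, x ∉ boundary α n → IsBoundaryOfEulerianOfRank (Set.Ici x) (n - rho x)) := by
  obtain ⟨Q, _, _, q, top, ⟨-, -, hg, hbal⟩, htop, hq, hqt, ⟨e⟩⟩ := h
  have hboundary : ∀ x, x ∈ boundary α n ↔ (e x : Q) < q := fun x => by
    rw [← orderIso_mem_boundary_iff e, hg.mem_boundary_compl_iff htop hbal hq]
  exact ⟨fun x hx => hg.isNearEulerianOfRank_Ici htop hbal hq hqt e ((hboundary x).1 hx),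
    fun x hx => hg.isBoundaryOfEulerianOfRank_Ici htop hbal hq e (mt (hboundary x).2 hx)⟩

/-- Let `P` be a near-Eulerian poset (of rank `n`).  For `x ∈ ∂P` the
subposet `[x, ∞) = {y : x ≤ y}` is near-Eulerian (of rank `n - ρ(x)`), and for
`x ∉ ∂P` it is the boundary of an Eulerian poset. -/
theorem Ici_nearEulerian_or_boundary
    (α : Type) [PartialOrder α] [Finite α] [OrderBot α] (n : ℕ)
    (h : IsNearEulerianOfRank α n) :
    (∀ x : α, x ∈ boundary α n → IsNearEulerianOfRank (Set.Ici x) (n - rho x)) ∧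
    (∀ x : α, x ∉ boundary α n → IsBoundaryOfEulerianOfRank (Set.Ici x) (n - rho x)) :=
  Ici_nearEulerian_or_boundary_general α n h

end CDIndex
end
end

section
/- Every Eulerian poset of positive rank is near-Eulerian. Concretely, if P is an Eulerian poset of rank n > 0, then Q := Σ̃P ∪ {1̂}, obtained by adjoining to P a new element q of rank n with ∂P < q and then a maximal element, is an Eulerian poset of rank n+1 with P = Q ∖ {q, 1̂}. -/
/-!
If `P` has a top element `t`, every other element lies below a coatom, and a coatom is covered
only by `t`; so `∂P = P ∖ {t}` and the new vertex `q` of `Q = Σ̃P ∪ {1̂}` is a twin of `t`: both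
are maximal in `Σ̃P` and have the same strict lower set. Hence `Q ∖ {q, 1̂}` and `Q ∖ {t, 1̂}` are
lower sets of `Q` isomorphic to `P`, and every chain of `Q` misses `q` or `t`. Maximal chains,
ranks and intervals `[s, u]` with `u ≠ 1̂` are therefore read off in `P`. An interval `[s, 1̂]` is
`{s, 1̂}` for `s ∈ {q, t}`, and otherwise the interval `[s, t]` of `P` together with `q` and `1̂`,
whose ranks `n` and `n + 1` have opposite parities.
-/

open scoped Classical

noncomputable section

namespace CDIndex

variable {α β : Type}

/-! ### The semisuspension -/

/-- The semisuspension of `α` relative to a set `S` (intended: `S = ∂α`): the poset `α`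
together with one new element `q` lying above `0̂` and above every element of `S`. -/
@[ext] structure Semisusp (α : Type) (S : Set α) : Type where
  toOpt : Option α

namespace Semisusp

variable {S : Set α}

/-- The new vertex `q` of the semisuspension. -/
def q : Semisusp α S := ⟨none⟩

/-- The inclusion of `α` into its semisuspension. -/
def incl (a : α) : Semisusp α S := ⟨some a⟩

instance instPartialOrder [PartialOrder α] [OrderBot α] : PartialOrder (Semisusp α S) where
  le x y := match x, y with
    | ⟨some a⟩, ⟨some b⟩ => a ≤ b
    | ⟨some a⟩, ⟨none⟩ => a = ⊥ ∨ ∃ s ∈ S, a ≤ s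
    | ⟨none⟩, ⟨some _⟩ => False
    | ⟨none⟩, ⟨none⟩ => True
  le_refl x := by rcases x with ⟨_ | a⟩ <;> simp
  le_trans x y z hxy hyz := by
    rcases x with ⟨_ | a⟩ <;> rcases y with ⟨_ | b⟩ <;> rcases z with ⟨_ | c⟩ <;>
      simp_all
    · rcases hyz with h | ⟨s, hs, hbs⟩
      · subst h
        exact Or.inl (le_bot_iff.mp hxy)
      · exact Or.inr ⟨s, hs, le_trans hxy hbs⟩
    · exact le_trans hxy hyz
  le_antisymm x y hxy hyx := by
    rcases x with ⟨_ | a⟩ <;> rcases y with ⟨_ | b⟩ <;> simp_all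
    exact le_antisymm hxy hyx

instance [PartialOrder α] [OrderBot α] : OrderBot (Semisusp α S) where
  bot := ⟨some ⊥⟩
  bot_le x := by
    rcases x with ⟨_ | a⟩
    · exact Or.inl rfl
    · show (⊥ : α) ≤ a
      exact bot_le

def equivOption : Semisusp α S ≃ Option α where
  toFun := toOpt
  invFun := mk
  left_inv _ := rfl
  right_inv _ := rfl

instance [Finite α] : Finite (Semisusp α S) := by
  have := Fintype.ofFinite α
  exact Finite.of_equiv (Option α) (equivOption (S := S)).symm

end Semisusp

section Chains

variable [PartialOrder α]

lemma exists_maxChain_finset [Finite α] (s : Finset α) (hs : IsChain (· ≤ ·) (s : Set α)) :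
    ∃ t : Finset α, IsChain (· ≤ ·) (t : Set α) ∧ s ⊆ t ∧
      ∀ u : Finset α, IsChain (· ≤ ·) (u : Set α) → t ⊆ u → t = u := by
  have := Fintype.ofFinite α
  obtain ⟨t, ht, htmax⟩ := Finset.exists_max_image
    {t : Finset α | IsChain (· ≤ ·) (t : Set α) ∧ s ⊆ t} Finset.card ⟨s, by simp [hs]⟩
  simp only [Finset.mem_filter, Finset.mem_univ, true_and] at ht htmax
  exact ⟨t, ht.1, ht.2, fun u hu htu =>
    Finset.eq_of_subset_of_card_le htu (htmax u ⟨hu, ht.2.trans htu⟩)⟩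

variable {n : ℕ}

lemma IsGradedOfRank.chain_card_le [Finite α] (hg : IsGradedOfRank α n) {s : Finset α}
    (hs : IsChain (· ≤ ·) (s : Set α)) : s.card ≤ n + 1 := by
  obtain ⟨t, ht, hst, hmax⟩ := exists_maxChain_finset s hs
  exact (Finset.card_le_card hst).trans_eq (hg t (Set.subset_univ _) ht fun u _ hu => hmax u hu)

lemma IsGradedOfRank.nontrivial [Finite α] (hg : IsGradedOfRank α n) (hn : 0 < n) :
    Nontrivial α := by
  obtain ⟨c, hc, -, hmax⟩ := exists_maxChain_finset (∅ : Finset α) (by simp)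
  have hcard := hg c (Set.subset_univ _) hc fun u _ hu => hmax u hu
  obtain ⟨a, -, b, -, hab⟩ := Finset.one_lt_card.mp (by omega : 1 < c.card)
  exact ⟨a, b, hab⟩

lemma rho_eq_of_chains {x : α} {m : ℕ}
    (hex : ∃ s : Finset α, IsChain (· ≤ ·) (s : Set α) ∧ (s : Set α) ⊆ Set.Iic x ∧
      s.card = m + 1)
    (hle : ∀ s : Finset α, IsChain (· ≤ ·) (s : Set α) → (s : Set α) ⊆ Set.Iic x →
      s.card ≤ m + 1) :
    rho x = m :=
  IsGreatest.csSup_eq ⟨hex, by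
    rintro k ⟨s, hs, hsx, hk⟩
    have := hle s hs hsx
    omega⟩

lemma IsGradedOfRank.rho_of_isTop [Finite α] {t : α} (hg : IsGradedOfRank α n)
    (htop : IsTop t) : rho t = n := by
  obtain ⟨c, hc, -, hmax⟩ := exists_maxChain_finset (∅ : Finset α) (by simp)
  exact rho_eq_of_chains
    ⟨c, hc, fun a _ => htop a, hg c (Set.subset_univ _) hc fun u _ hu => hmax u hu⟩
    fun s hs _ => hg.chain_card_le hs

lemma IsGradedOfRank.rho_of_covBy_isTop [Finite α] {x t : α} (hg : IsGradedOfRank α n)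
    (htop : IsTop t) (hx : x ⋖ t) : rho x = n - 1 := by
  have hxt : IsChain (· ≤ ·) (({x, t} : Finset α) : Set α) := by
    rw [Finset.coe_pair]
    exact IsChain.pair hx.le
  obtain ⟨c, hc, hxtc, hmax⟩ := exists_maxChain_finset _ hxt
  have hcard := hg c (Set.subset_univ _) hc fun u _ hu => hmax u hu
  have htwo : 2 ≤ c.card := (Finset.card_pair hx.ne).symm.le.trans (Finset.card_le_card hxtc)
  have htc : t ∈ c := hxtc (by simp)
  have hbelow : ∀ a ∈ c, a ≠ t → a ≤ x := by
    intro a ha hat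
    rcases eq_or_ne a x with rfl | hax
    · exact le_rfl
    refine (hc ha (hxtc (by simp)) hax).resolve_right fun hxa => ?_
    exact hx.2 (hxa.lt_of_ne hax.symm) ((htop a).lt_of_ne hat)
  refine rho_eq_of_chains ⟨c.erase t, hc.mono (by simp), fun a ha => ?_, ?_⟩ fun s hs hsx => ?_
  · rw [Finset.coe_erase] at ha
    exact hbelow a ha.1 ha.2
  · rw [Finset.card_erase_of_mem htc]
    omega
  · have hts : t ∉ s := fun h => hx.lt.not_ge (hsx h)
    have := hg.chain_card_le (s := insert t s)
      (by rw [Finset.coe_insert]; exact hs.insert fun b _ _ => Or.inr (htop b))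
    rw [Finset.card_insert_of_notMem hts] at this
    omega

end Chains

lemma ncard_sep_insert {p : α → Prop} {a : α} {X : Set α} (ha : a ∉ X) (hX : X.Finite) :
    {y ∈ insert a X | p y}.ncard = {y ∈ X | p y}.ncard + if p a then 1 else 0 := by
  change (insert a X ∩ {y | p y}).ncard = (X ∩ {y | p y}).ncard + _
  split_ifs with hpa
  · rw [Set.insert_inter_of_mem (show a ∈ {y | p y} from hpa),
      Set.ncard_insert_of_notMem (fun h => ha h.1) (hX.inter_of_left _)]
  · rw [Set.insert_inter_of_notMem (show a ∉ {y | p y} from hpa), add_zero]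

section Balanced

variable [PartialOrder α]

def IsRankBalanced (X : Set α) : Prop :=
  {y ∈ X | Even (rho y)}.ncard = {y ∈ X | Odd (rho y)}.ncard

lemma IsRankBalanced.insert_insert {X : Set α} {u v : α} (hX : IsRankBalanced X)
    (hfin : X.Finite) (hu : u ∉ X) (hv : v ∉ X) (huv : u ≠ v) (hr : rho v = rho u + 1) :
    IsRankBalanced (insert u (insert v X)) := by
  have hu' : u ∉ insert v X := by simp [huv, hu]
  unfold IsRankBalanced at *
  rw [ncard_sep_insert hu' (hfin.insert v), ncard_sep_insert hv hfin,
    ncard_sep_insert hu' (hfin.insert v), ncard_sep_insert hv hfin, hX, hr, Nat.even_add_one,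
    Nat.odd_add_one, ← Nat.not_even_iff_odd]
  split_ifs <;> omega

lemma isRankBalanced_Icc_of_covBy {u v : α} (h : u ⋖ v) (hr : rho v = rho u + 1) :
    IsRankBalanced (Set.Icc u v) := by
  rw [h.Icc_eq, Set.singleton_def v]
  exact IsRankBalanced.insert_insert (by simp [IsRankBalanced]) Set.finite_empty
    (Set.notMem_empty u) (Set.notMem_empty v) h.ne hr

lemma IsRankBalanced.image [PartialOrder β] {f : α → β} (hf : Function.Injective f)
    (hrho : ∀ x, rho (f x) = rho x) {X : Set α} (hX : IsRankBalanced X) :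
    IsRankBalanced (f '' X) := by
  have hsep : ∀ p : ℕ → Prop, {y ∈ f '' X | p (rho y)} = f '' {x ∈ X | p (rho x)} := by
    intro p
    ext y
    constructor
    · rintro ⟨⟨x, hx, rfl⟩, hp⟩
      exact ⟨x, ⟨hx, hrho x ▸ hp⟩, rfl⟩
    · rintro ⟨x, ⟨hx, hp⟩, rfl⟩
      exact ⟨⟨x, hx, rfl⟩, (hrho x).symm ▸ hp⟩
  unfold IsRankBalanced at *
  rw [hsep, hsep, Set.ncard_image_of_injective _ hf, Set.ncard_image_of_injective _ hf, hX]

end Balanced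

section Embeddings

variable [PartialOrder α] [PartialOrder β]

lemma rho_apply_of_isLowerSet_range (e : α ↪o β) (he : IsLowerSet (Set.range e)) (x : α) :
    rho (e x) = rho x := by
  unfold rho
  congr 1
  ext k
  constructor
  · rintro ⟨t, ht, htx, hk⟩
    have htr : (t : Set β) ⊆ Set.range e := fun y hy => he (htx hy) ⟨x, rfl⟩
    refine ⟨t.preimage e e.injective.injOn, ?_, fun a ha => ?_, ?_⟩
    · rw [Finset.coe_preimage]
      exact ht.preimage_relEmbedding e
    · exact e.le_iff_le.mp (htx (Finset.mem_preimage.mp ha))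
    · rw [Finset.card_preimage, Finset.filter_true_of_mem fun y hy => htr hy, hk]
  · rintro ⟨s, hs, hsx, hk⟩
    refine ⟨s.image e, ?_, fun y hy => ?_,
      by rw [Finset.card_image_of_injective _ e.injective, hk]⟩
    · rw [Finset.coe_image]
      exact hs.image e
    · obtain ⟨a, ha, rfl⟩ := Finset.mem_coe.mp hy |> Finset.mem_image.mp
      exact e.monotone (hsx ha)

lemma isRankBalanced_Icc_of_isLowerSet_range (e : α ↪o β) (he : IsLowerSet (Set.range e))
    (hbal : BalancedIntervalsIn (Set.univ : Set α)) {s : β} {b : α} (hs : s < e b) :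
    IsRankBalanced (Set.Icc s (e b)) := by
  obtain ⟨a, rfl⟩ := he hs.le ⟨b, rfl⟩
  rw [← e.image_Icc he.ordConnected]
  exact IsRankBalanced.image e.injective (rho_apply_of_isLowerSet_range e he)
    (hbal a trivial b trivial (e.lt_iff_lt.mp hs))

lemma card_eq_of_maxChain_subset_insert_range {n : ℕ} (e : α ↪o β) {T : β} (hT : IsTop T)
    (hTe : T ∉ Set.range e) (hg : IsGradedOfRank α n) {c : Finset β}
    (hc : IsChain (· ≤ ·) (c : Set β))
    (hmax : ∀ u : Finset β, IsChain (· ≤ ·) (u : Set β) → c ⊆ u → c = u)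
    (hce : (c : Set β) ⊆ insert T (Set.range e)) :
    c.card = n + 2 := by
  set d := c.preimage e e.injective.injOn
  have hlift : ∀ u : Finset α, IsChain (· ≤ ·) (u : Set α) →
      IsChain (· ≤ ·) ((insert T (u.image e) : Finset β) : Set β) := fun u hu => by
    rw [Finset.coe_insert, Finset.coe_image]
    exact (hu.image e).insert fun b _ _ => Or.inr (hT b)
  have hd : IsChain (· ≤ ·) (d : Set α) := by
    rw [Finset.coe_preimage]
    exact hc.preimage_relEmbedding e
  have hcd : c = insert T (d.image e) := hmax _ (hlift d hd) fun x hx => by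
    obtain rfl | ⟨a, rfl⟩ := hce hx
    · exact Finset.mem_insert_self _ _
    · exact Finset.mem_insert_of_mem (Finset.mem_image_of_mem _ (Finset.mem_preimage.mpr hx))
  have hdmax : ∀ u : Finset α, (u : Set α) ⊆ Set.univ → IsChain (· ≤ ·) (u : Set α) →
      d ⊆ u → d = u := fun u _ hu hdu => by
    have hcu : c = insert T (u.image e) :=
      hmax _ (hlift u hu) (hcd ▸ Finset.insert_subset_insert _ (Finset.image_subset_image hdu))
    refine hdu.antisymm fun a ha => Finset.mem_preimage.mpr ?_
    rw [hcu]
    exact Finset.mem_insert_of_mem (Finset.mem_image_of_mem _ ha)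
  have hTd : T ∉ d.image e := fun h => hTe ((Finset.mem_image.mp h).imp fun _ => And.right)
  rw [hcd, Finset.card_insert_of_notMem hTd, Finset.card_image_of_injective _ e.injective,
    hg d (Set.subset_univ _) hd hdmax]

end Embeddings

section WithTopMax

variable [PartialOrder α] [PartialOrder β]

lemma range_trans_coeOrderHom {f : α ↪o β} {m : β} (hf : Set.range f = {m}ᶜ) :
    Set.range (f.trans WithTop.coeOrderHom) = {x | x ≠ ↑m ∧ x ≠ ⊤} := by
  ext x
  cases x with
  | top => simp
  | coe b =>
    have : b ∈ Set.range f ↔ b ≠ m := by rw [hf]; rfl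
    simpa [WithTop.coe_eq_coe] using this

lemma isLowerSet_ne_coe_ne_top {m : β} (hm : IsMax m) :
    IsLowerSet {x : WithTop β | x ≠ ↑m ∧ x ≠ ⊤} := by
  rintro x y hyx ⟨hxm, hxt⟩
  obtain ⟨b, rfl⟩ := WithTop.ne_top_iff_exists.mp hxt
  refine ⟨?_, ne_top_of_le_ne_top hxt hyx⟩
  rintro rfl
  exact hxm (congrArg _ (hm.eq_of_le (WithTop.coe_le_coe.mp hyx)).symm)

end WithTopMax

section Boundary

variable [PartialOrder α] [Finite α] {n : ℕ} {t : α}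

lemma boundary_eq_compl_singleton (hg : IsGradedOfRank α n) (hn : 0 < n) (htop : IsTop t) :
    boundary α n = {t}ᶜ := by
  ext y
  simp only [boundary, boundaryIn, Set.mem_univ, true_and, Set.mem_ofPred_eq,
    Set.mem_compl_singleton_iff]
  constructor
  · rintro ⟨x, hx, -, hyx⟩ rfl
    rw [(htop x).antisymm hyx, hg.rho_of_isTop htop] at hx
    omega
  · intro hy
    obtain ⟨x, ⟨hyx, hxt⟩, hmax⟩ :=
      (Set.toFinite {z | y ≤ z ∧ z ≠ t}).exists_maximal ⟨y, le_rfl, hy⟩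
    have hcov : x ⋖ t := ⟨(htop x).lt_of_ne hxt, fun z hxz hzt =>
      hxz.not_ge (hmax ⟨hyx.trans hxz.le, hzt.ne⟩ hxz.le)⟩
    have hcovers : {z | x ⋖ z} = {t} := Set.eq_singleton_iff_unique_mem.mpr ⟨hcov,
      fun z hz => by_contra fun hzt => hz.lt.not_ge (hmax ⟨hyx.trans hz.le, hzt⟩ hz.le)⟩
    exact ⟨x, hg.rho_of_covBy_isTop htop hcov, by rw [hcovers, Set.ncard_singleton], hyx⟩

end Boundary

namespace Semisusp

variable {S : Set α}

lemma eq_q_or_exists_eq_incl (x : Semisusp α S) : x = q ∨ ∃ a, x = incl a := by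
  rcases x with ⟨_ | a⟩
  · exact Or.inl rfl
  · exact Or.inr ⟨a, rfl⟩

variable [PartialOrder α] [OrderBot α]

lemma isMax_q : IsMax (q : Semisusp α S) := by
  rintro ⟨_ | a⟩ h
  · exact le_rfl
  · exact (h : False).elim

lemma incl_le_q_iff_ne_of_boundary [Finite α] {n : ℕ} {t : α} (hg : IsGradedOfRank α n)
    (hn : 0 < n) (htop : IsTop t) (a : α) :
    (incl a : Semisusp α (boundary α n)) ≤ q ↔ a ≠ t := by
  have hbot : (⊥ : α) ≠ t := fun h => by
    have := hg.nontrivial hn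
    obtain ⟨x, y, hxy⟩ := exists_pair_ne α
    exact hxy ((le_bot_iff.mp (h ▸ htop x)).trans (le_bot_iff.mp (h ▸ htop y)).symm)
  have hle : (incl a : Semisusp α (boundary α n)) ≤ q ↔ a = ⊥ ∨ ∃ s ∈ boundary α n, a ≤ s :=
    Iff.rfl
  rw [hle, boundary_eq_compl_singleton hg hn htop]
  constructor
  · rintro (rfl | ⟨s, hs, has⟩)
    · exact hbot
    · rintro rfl
      exact hs ((htop s).antisymm has)
  · exact fun ha => Or.inr ⟨a, ha, le_rfl⟩

def inclEmb : α ↪o Semisusp α S where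
  toFun := incl
  inj' _ _ h := Option.some_injective _ (congrArg toOpt h)
  map_rel_iff' := Iff.rfl

lemma range_inclEmb : Set.range (inclEmb : α ↪o Semisusp α S) = {q}ᶜ := by
  ext x
  constructor
  · rintro ⟨a, rfl⟩ h
    cases h
  · rintro hx
    rcases x with ⟨_ | a⟩
    · exact absurd rfl hx
    · exact ⟨a, rfl⟩

variable {t : α} (htop : IsTop t) (hS : ∀ a : α, (incl a : Semisusp α S) ≤ q ↔ a ≠ t)
include htop hS

lemma isMax_incl_top : IsMax (incl t : Semisusp α S) := by
  rintro ⟨_ | a⟩ h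
  · exact absurd rfl ((hS t).mp h)
  · exact htop a

def inclTopToQ : α ↪o Semisusp α S :=
  OrderEmbedding.ofMapLEIff (fun a => if a = t then q else incl a) fun a b => by
    by_cases ha : a = t <;> by_cases hb : b = t <;> simp only [ha, hb, if_true, if_false]
    · exact iff_of_true le_rfl le_rfl
    · exact iff_of_false (fun h => (h : False)) fun h => hb ((htop b).antisymm h)
    · exact (hS a).trans (iff_of_true ha (htop a))
    · exact Iff.rfl

lemma inclTopToQ_apply (a : α) : inclTopToQ htop hS a = if a = t then q else incl a := rfl

lemma inclTopToQ_self : inclTopToQ htop hS t = q := by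
  rw [inclTopToQ_apply, if_pos rfl]

lemma range_inclTopToQ : Set.range (inclTopToQ htop hS) = {incl t}ᶜ := by
  ext x
  constructor
  · rintro ⟨a, rfl⟩ h
    rw [inclTopToQ_apply] at h
    split_ifs at h with ha
    · cases h
    · exact ha (Option.some_injective _ (congrArg toOpt h))
  · rintro hx
    rcases x with ⟨_ | a⟩
    · exact ⟨t, inclTopToQ_self htop hS⟩
    · have ha : a ≠ t := fun h => hx (h ▸ rfl)
      exact ⟨a, by rw [inclTopToQ_apply, if_neg ha]; rfl⟩

end Semisusp

section SemisuspWithTop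

open Semisusp

variable [PartialOrder α] [OrderBot α] {S : Set α} {n : ℕ} {t : α}

def orderIsoWithTop :
    α ≃o {x : WithTop (Semisusp α S) //
      x ≠ ((q : Semisusp α S) : WithTop (Semisusp α S)) ∧ x ≠ ⊤} :=
  (OrderEmbedding.orderIso (f := inclEmb.trans WithTop.coeOrderHom)).trans
    (OrderIso.setCongr _ _ (range_trans_coeOrderHom range_inclEmb))

lemma isLowerSet_range_inclEmb_trans :
    IsLowerSet (Set.range ((inclEmb : α ↪o Semisusp α S).trans WithTop.coeOrderHom)) := by
  rw [range_trans_coeOrderHom range_inclEmb]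
  exact isLowerSet_ne_coe_ne_top isMax_q

lemma rho_coe_incl (a : α) : rho ((incl a : Semisusp α S) : WithTop (Semisusp α S)) = rho a :=
  rho_apply_of_isLowerSet_range _ isLowerSet_range_inclEmb_trans a

variable (htop : IsTop t) (hS : ∀ a : α, (incl a : Semisusp α S) ≤ q ↔ a ≠ t)
include htop hS

lemma isLowerSet_range_inclTopToQ_trans :
    IsLowerSet (Set.range ((inclTopToQ htop hS).trans WithTop.coeOrderHom)) := by
  rw [range_trans_coeOrderHom (range_inclTopToQ htop hS)]
  exact isLowerSet_ne_coe_ne_top (isMax_incl_top htop hS)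

lemma rho_coe_q [Finite α] (hg : IsGradedOfRank α n) :
    rho ((q : Semisusp α S) : WithTop (Semisusp α S)) = n := by
  rw [← inclTopToQ_self htop hS, ← hg.rho_of_isTop htop]
  exact rho_apply_of_isLowerSet_range _ (isLowerSet_range_inclTopToQ_trans htop hS) t

lemma isGradedOfRank_withTop (hg : IsGradedOfRank α n) :
    IsGradedOfRank (WithTop (Semisusp α S)) (n + 1) := by
  intro c _ hc hmax
  have hmax' : ∀ u : Finset (WithTop (Semisusp α S)),
      IsChain (· ≤ ·) (u : Set (WithTop (Semisusp α S))) → c ⊆ u → c = u :=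
    fun u hu => hmax u (Set.subset_univ _) hu
  have htop_range : ∀ f : α ↪o Semisusp α S, ⊤ ∉ Set.range (f.trans WithTop.coeOrderHom) :=
    fun f ⟨_, h⟩ => WithTop.coe_ne_top h
  have hsub : ∀ (f : α ↪o Semisusp α S) {m : Semisusp α S}, Set.range f = {m}ᶜ →
      (m : WithTop (Semisusp α S)) ∉ c →
        (c : Set _) ⊆ insert ⊤ (Set.range (f.trans WithTop.coeOrderHom)) := by
    intro f m hf hm x hx
    rw [range_trans_coeOrderHom hf]
    by_cases hxt : x = ⊤
    · exact Or.inl hxt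
    · exact Or.inr ⟨fun h => hm (h ▸ hx), hxt⟩
  by_cases hq : ((q : Semisusp α S) : WithTop (Semisusp α S)) ∈ c
  · have ht : ((incl t : Semisusp α S) : WithTop (Semisusp α S)) ∉ c := fun h => by
      rcases hc hq h (fun h' => by cases WithTop.coe_injective h') with h' | h'
      · exact (WithTop.coe_le_coe.mp h' : False)
      · exact (hS t).mp (WithTop.coe_le_coe.mp h') rfl
    exact card_eq_of_maxChain_subset_insert_range _ isTop_top (htop_range _) hg hc hmax'
      (hsub _ (range_inclTopToQ htop hS) ht)
  · exact card_eq_of_maxChain_subset_insert_range _ isTop_top (htop_range _) hg hc hmax'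
      (hsub _ range_inclEmb hq)

lemma Icc_coe_incl_top {a : α} (ha : a ≠ t) :
    Set.Icc ((incl a : Semisusp α S) : WithTop (Semisusp α S)) ⊤ =
    insert ((q : Semisusp α S) : WithTop (Semisusp α S))
      (insert ⊤ (Set.Icc ((incl a : Semisusp α S) : WithTop (Semisusp α S))
        ((incl t : Semisusp α S) : WithTop (Semisusp α S)))) := by
  ext y
  cases y with
  | top => simp
  | coe x =>
    obtain rfl | ⟨b, rfl⟩ := eq_q_or_exists_eq_incl x
    · exact iff_of_true ⟨WithTop.coe_le_coe.mpr ((hS a).mpr ha), le_top⟩ (Set.mem_insert _ _)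
    · constructor
      · rintro ⟨h, -⟩
        exact Or.inr (Or.inr ⟨h, WithTop.coe_le_coe.mpr (htop b)⟩)
      · rintro (h | h | ⟨h, -⟩)
        · cases WithTop.coe_injective h
        · exact absurd h WithTop.coe_ne_top
        · exact ⟨h, le_top⟩

lemma isRankBalanced_Icc_top [Finite α] (hg : IsGradedOfRank α n)
    (hbal : BalancedIntervalsIn (Set.univ : Set α)) {s : WithTop (Semisusp α S)} (hs : s < ⊤) :
    IsRankBalanced (Set.Icc s ⊤) := by
  have hrho_top : rho (⊤ : WithTop (Semisusp α S)) = n + 1 :=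
    (isGradedOfRank_withTop htop hS hg).rho_of_isTop isTop_top
  obtain ⟨x, rfl⟩ := WithTop.ne_top_iff_exists.mp hs.ne
  obtain rfl | ⟨a, rfl⟩ := eq_q_or_exists_eq_incl x
  · exact isRankBalanced_Icc_of_covBy (WithTop.coe_covBy_top.mpr isMax_q)
      (by rw [hrho_top, rho_coe_q htop hS hg])
  by_cases ha : a = t
  · subst ha
    exact isRankBalanced_Icc_of_covBy (WithTop.coe_covBy_top.mpr (isMax_incl_top htop hS))
      (by rw [hrho_top, rho_coe_incl, hg.rho_of_isTop htop])
  have hlt := OrderEmbedding.strictMono ((inclEmb : α ↪o Semisusp α S).trans WithTop.coeOrderHom)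
    ((htop a).lt_of_ne ha)
  rw [Icc_coe_incl_top htop hS ha]
  refine (isRankBalanced_Icc_of_isLowerSet_range _ isLowerSet_range_inclEmb_trans hbal
    hlt).insert_insert (Set.toFinite _) (fun h => (WithTop.coe_le_coe.mp h.2 : False))
    (fun h => WithTop.not_top_le_coe _ h.2) WithTop.coe_ne_top ?_
  rw [hrho_top, rho_coe_q htop hS hg]

lemma balancedIntervalsIn_withTop [Finite α] (hg : IsGradedOfRank α n)
    (hbal : BalancedIntervalsIn (Set.univ : Set α)) :
    BalancedIntervalsIn (Set.univ : Set (WithTop (Semisusp α S))) := by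
  intro s _ u _ hsu
  cases u with
  | top => exact isRankBalanced_Icc_top htop hS hg hbal hsu
  | coe x =>
    obtain rfl | ⟨b, rfl⟩ := eq_q_or_exists_eq_incl x
    · rw [← inclTopToQ_self htop hS] at hsu ⊢
      exact isRankBalanced_Icc_of_isLowerSet_range _ (isLowerSet_range_inclTopToQ_trans htop hS)
        hbal hsu
    · exact isRankBalanced_Icc_of_isLowerSet_range _ isLowerSet_range_inclEmb_trans hbal hsu

end SemisuspWithTop

/-- Every Eulerian poset of positive rank is near-Eulerian: if `P` is
Eulerian of rank `n > 0` then `Q := Σ̃P ∪ {1̂}` (the semisuspension, with a new maximal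
element adjoined) is Eulerian of rank `n + 1`, the semisuspension vertex `q` has rank
`n`, `P = Q ∖ {q, 1̂}`, and hence `P` is near-Eulerian. -/
theorem eulerian_isNearEulerian
    (α : Type) [PartialOrder α] [Finite α] [OrderBot α] (n : ℕ) (hn : 0 < n)
    (h : IsEulerianOfRank α n) :
    IsEulerianOfRank (WithTop (Semisusp α (boundary α n))) (n + 1) ∧
    rho ((Semisusp.q : Semisusp α (boundary α n)) : WithTop (Semisusp α (boundary α n))) = n ∧
    Nonempty (α ≃o {x : WithTop (Semisusp α (boundary α n)) //
      x ≠ ((Semisusp.q : Semisusp α (boundary α n)) : WithTop (Semisusp α (boundary α n))) ∧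
      x ≠ ⊤}) ∧
    IsNearEulerianOfRank α n := by
  obtain ⟨-, ⟨t, htop⟩, hg, hbal⟩ := h
  have hS := Semisusp.incl_le_q_iff_ne_of_boundary hg hn htop
  have hQ : IsEulerianOfRank (WithTop (Semisusp α (boundary α n))) (n + 1) :=
    ⟨⟨⊥, fun _ => bot_le⟩, ⟨⊤, fun _ => le_top⟩, isGradedOfRank_withTop htop hS hg,
      balancedIntervalsIn_withTop htop hS hg hbal⟩
  have hq := rho_coe_q htop hS hg
  exact ⟨hQ, hq, ⟨orderIsoWithTop⟩, _, inferInstance, inferInstance, _, ⊤, hQ,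
    fun _ => le_top, hq, WithTop.coe_ne_top, ⟨orderIsoWithTop⟩⟩

end CDIndex
end
end
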